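/- arXiv:2311.16403 — 2 statements merged into one kernel-verified Lean document; each statement's English description precedes it below -/
import Mathlib

section
/- Let C ∈ M_{n-1} and let θ, γ be two graded 2-cocycles of p(C). Then θ and γ are proportional on every connected component G of Gr(C), i.e., θ_p γ_q = θ_q γ_p for all vertices p,q in the same connected component. -/
/-- Adjacency condition of the graph `Gr(C)`. -/
def adjRel {K : Type*} [Field K] (n : ℕ) (c : ℕ → ℕ → K) (p q : ℕ) : Prop :=
  p + q = n ∨ ∃ i j l, 1 ≤ i ∧ 1 ≤ j ∧ 1 ≤ l ∧ i + j + l = n ∧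
    p = i + j ∧ q = j + l ∧ c i j * c j l ≠ 0

/-- The undirected simple graph `Gr(C)` on the vertices `1,...,n-1`. -/
def grC {K : Type*} [Field K] (n : ℕ) (c : ℕ → ℕ → K) : SimpleGraph ℕ where
  Adj p q := p ≠ q ∧ (adjRel n c p q ∨ adjRel n c q p)
  symm := by constructor; intro p q h; exact ⟨h.1.symm, h.2.symm⟩
  loopless := by constructor; intro p h; exact h.1 rfl

/-! Along an edge `p ~ q` of `Gr(C)` every graded 2-cocycle satisfies `θ_p = a θ_q` for a scalar `a`
depending only on `C` and the edge: `a = 1` if `p + q = n` (symmetry of `θ`), and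
`a = c_{jl} / c_{ij}` if `p = i + j`, `q = j + l` (the cocycle identity). Multiplying these scalars
along a walk, `θ_p = a θ_q` and `γ_p = a γ_q` with the same `a`, whence `θ_p γ_q = θ_q γ_p`. -/

structure IsGradedCocycle {K : Type*} [Field K] (n : ℕ) (c : ℕ → ℕ → K) (t : ℕ → K) : Prop where
  symm : ∀ i, 1 ≤ i → i ≤ n - 1 → t i = t (n - i)
  mul_eq : ∀ i j l, 1 ≤ i → 1 ≤ j → 1 ≤ l → i + j + l = n →
    t (i + j) * c i j = t (j + l) * c j l

def CocycleMultiple {K : Type*} [Field K] (n : ℕ) (c : ℕ → ℕ → K) (p q : ℕ) : Prop :=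
  ∃ a : K, ∀ t, IsGradedCocycle n c t → t p = a * t q

-- `grC` lives on all of `ℕ`; its only edge leaving `1, …, n-1` is `0 ~ n`.
theorem adjRel_bounds_iff {K : Type*} [Field K] {n : ℕ} {c : ℕ → ℕ → K} {p q : ℕ}
    (h : adjRel n c p q) : (1 ≤ p ∧ p ≤ n - 1) ↔ (1 ≤ q ∧ q ≤ n - 1) := by
  rcases h with hpq | ⟨i, j, l, hi, hj, hl, hijl, rfl, rfl, -⟩ <;> omega

namespace CocycleMultiple

variable {K : Type*} [Field K] {n : ℕ} {c : ℕ → ℕ → K}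

theorem refl (p : ℕ) : CocycleMultiple n c p p :=
  ⟨1, fun _ _ => (one_mul _).symm⟩

theorem trans {p q r : ℕ} (hpq : CocycleMultiple n c p q) (hqr : CocycleMultiple n c q r) :
    CocycleMultiple n c p r := by
  obtain ⟨a, ha⟩ := hpq
  obtain ⟨b, hb⟩ := hqr
  exact ⟨a * b, fun t ht => by rw [ha t ht, hb t ht, mul_assoc]⟩

theorem of_add_eq {p q : ℕ} (hpq : p + q = n) (hp1 : 1 ≤ p) (hp2 : p ≤ n - 1) :
    CocycleMultiple n c p q :=
  ⟨1, fun t ht => by rw [one_mul, ht.symm p hp1 hp2, ← hpq, Nat.add_sub_cancel_left]⟩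

theorem of_mul_ne_zero {i j l : ℕ} (hi : 1 ≤ i) (hj : 1 ≤ j) (hl : 1 ≤ l) (hijl : i + j + l = n)
    (hc : c i j * c j l ≠ 0) :
    CocycleMultiple n c (i + j) (j + l) ∧ CocycleMultiple n c (j + l) (i + j) := by
  obtain ⟨hij, hjl⟩ := mul_ne_zero_iff.mp hc
  refine ⟨⟨c j l / c i j, fun t ht => ?_⟩, ⟨c i j / c j l, fun t ht => ?_⟩⟩
  · rw [div_mul_eq_mul_div, eq_div_iff hij, ht.mul_eq i j l hi hj hl hijl, mul_comm]
  · rw [div_mul_eq_mul_div, eq_div_iff hjl, ← ht.mul_eq i j l hi hj hl hijl, mul_comm]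

theorem of_adjRel {p q : ℕ} (h : adjRel n c p q) (hp1 : 1 ≤ p) (hp2 : p ≤ n - 1) :
    CocycleMultiple n c p q ∧ CocycleMultiple n c q p := by
  rcases h with hpq | ⟨i, j, l, hi, hj, hl, hijl, rfl, rfl, hc⟩
  · exact ⟨of_add_eq hpq hp1 hp2, of_add_eq (by omega) (by omega) (by omega)⟩
  · exact of_mul_ne_zero hi hj hl hijl hc

theorem of_adj {p q : ℕ} (h : (grC n c).Adj p q) (hp1 : 1 ≤ p) (hp2 : p ≤ n - 1) :
    1 ≤ q ∧ q ≤ n - 1 ∧ CocycleMultiple n c p q := by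
  rcases h.2 with h | h
  · have hq := (adjRel_bounds_iff h).1 ⟨hp1, hp2⟩
    exact ⟨hq.1, hq.2, (of_adjRel h hp1 hp2).1⟩
  · have hq := (adjRel_bounds_iff h).2 ⟨hp1, hp2⟩
    exact ⟨hq.1, hq.2, (of_adjRel h hq.1 hq.2).2⟩

theorem of_walk {p q : ℕ} (w : (grC n c).Walk p q) (hp1 : 1 ≤ p) (hp2 : p ≤ n - 1) :
    CocycleMultiple n c p q := by
  induction w with
  | nil => exact refl _
  | cons hadj _ ih =>
    obtain ⟨hb1, hb2, hpb⟩ := of_adj hadj hp1 hp2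
    exact hpb.trans (ih hb1 hb2)

theorem mul_eq_mul {p q : ℕ} (h : CocycleMultiple n c p q) {t s : ℕ → K}
    (ht : IsGradedCocycle n c t) (hs : IsGradedCocycle n c s) : t p * s q = t q * s p := by
  obtain ⟨a, ha⟩ := h
  rw [ha t ht, ha s hs]
  ring

end CocycleMultiple

theorem stmt_14_general {K : Type*} [Field K] (n : ℕ) (c : ℕ → ℕ → K)
    -- two graded 2-cocycles, given as tuples (t_i), (s_i)
    (t s : ℕ → K)
    (htsym : ∀ i, 1 ≤ i → i ≤ n - 1 → t i = t (n - i))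
    (htinv : ∀ i j l, 1 ≤ i → 1 ≤ j → 1 ≤ l → i + j + l = n →
      t (i + j) * c i j = t (j + l) * c j l)
    (hssym : ∀ i, 1 ≤ i → i ≤ n - 1 → s i = s (n - i))
    (hsinv : ∀ i j l, 1 ≤ i → 1 ≤ j → 1 ≤ l → i + j + l = n →
      s (i + j) * c i j = s (j + l) * c j l) :
    -- θ and γ are proportional on every connected component of Gr(C)
    ∀ p q, (grC n c).Reachable p q → 1 ≤ p → p ≤ n - 1 → 1 ≤ q → q ≤ n - 1 →
      t p * s q = t q * s p := by
  rintro p q ⟨w⟩ hp1 hp2 - -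
  exact (CocycleMultiple.of_walk w hp1 hp2).mul_eq_mul ⟨htsym, htinv⟩ ⟨hssym, hsinv⟩

theorem stmt_14 {K : Type*} [Field K] (n : ℕ) (hn : 2 ≤ n) (c : ℕ → ℕ → K)
    (hsym : ∀ i j, c i j = c j i)
    (hassoc : ∀ i j l, 1 ≤ i → 1 ≤ j → 1 ≤ l →
      c j l * c i (j + l) = c i j * c (i + j) l)
    (hzero : ∀ i j, i = 0 ∨ j = 0 ∨ n - 1 < i + j → c i j = 0)
    -- two graded 2-cocycles, given as tuples (t_i), (s_i)
    (t s : ℕ → K)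
    (htsym : ∀ i, 1 ≤ i → i ≤ n - 1 → t i = t (n - i))
    (htinv : ∀ i j l, 1 ≤ i → 1 ≤ j → 1 ≤ l → i + j + l = n →
      t (i + j) * c i j = t (j + l) * c j l)
    (hssym : ∀ i, 1 ≤ i → i ≤ n - 1 → s i = s (n - i))
    (hsinv : ∀ i j l, 1 ≤ i → 1 ≤ j → 1 ≤ l → i + j + l = n →
      s (i + j) * c i j = s (j + l) * c j l) :
    -- θ and γ are proportional on every connected component of Gr(C)
    ∀ p q, (grC n c).Reachable p q → 1 ≤ p → p ≤ n - 1 → 1 ≤ q → q ≤ n - 1 →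
      t p * s q = t q * s p :=
  stmt_14_general n c t s htsym htinv hssym hsinv
end

section
/- Let C ∈ M_{n-1} and σ = (b_1,...,b_{n-1}) a graded algebra automorphism of p(C) (so b_i ∈ k* and b_{i+j} = b_i b_j whenever c_{ij} ≠ 0). If vertices p and q lie in the same connected component of Gr(C), then b_p b_{n-p} = b_q b_{n-q}. -/
theorem SimpleGraph.Reachable.apply_eq_of_forall_adj {V β : Type*} {G : SimpleGraph V}
    {f : V → β} (hf : ∀ u v, G.Adj u v → f u = f v) {u v : V} (huv : G.Reachable u v) : f u = f v := by
  obtain ⟨w⟩ := huv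
  induction w with
  | nil => rfl
  | cons hadj _ ih => exact (hf _ _ hadj).trans ih

section

variable {K : Type*} [Field K] {n : ℕ} {c : ℕ → ℕ → K} {b : ℕ → K}

theorem adjRel.mul_sub_eq
    (haut : ∀ i j, 1 ≤ i → 1 ≤ j → i + j ≤ n - 1 → c i j ≠ 0 → b (i + j) = b i * b j)
    {p q : ℕ} (h : adjRel n c p q) : b p * b (n - p) = b q * b (n - q) := by
  rcases h with hpq | ⟨i, j, l, hi, hj, hl, hsum, rfl, rfl, hc⟩
  · rw [show n - p = q by omega, show n - q = p by omega, mul_comm]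
  · have hij : b (i + j) = b i * b j := haut i j hi hj (by omega) (left_ne_zero_of_mul hc)
    have hjl : b (j + l) = b j * b l := haut j l hj hl (by omega) (right_ne_zero_of_mul hc)
    rw [show n - (i + j) = l by omega, show n - (j + l) = i by omega, hij, hjl]
    ring

theorem grC_adj_mul_sub_eq
    (haut : ∀ i j, 1 ≤ i → 1 ≤ j → i + j ≤ n - 1 → c i j ≠ 0 → b (i + j) = b i * b j)
    {p q : ℕ} (h : (grC n c).Adj p q) : b p * b (n - p) = b q * b (n - q) :=
  h.2.elim (adjRel.mul_sub_eq haut) fun hqp => (adjRel.mul_sub_eq haut hqp).symm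

end

theorem stmt_15_general {K : Type*} [Field K] (n : ℕ) (c : ℕ → ℕ → K)
    -- a graded algebra automorphism σ = (b_1,...,b_{n-1}) of p(C)
    (b : ℕ → K)
    (haut : ∀ i j, 1 ≤ i → 1 ≤ j → i + j ≤ n - 1 → c i j ≠ 0 →
      b (i + j) = b i * b j) :
    -- then b_p b_{n-p} = b_q b_{n-q} for vertices in the same connected component
    ∀ p q, (grC n c).Reachable p q → 1 ≤ p → p ≤ n - 1 → 1 ≤ q → q ≤ n - 1 →
      b p * b (n - p) = b q * b (n - q) :=
  fun _ _ hpq _ _ _ _ =>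
    hpq.apply_eq_of_forall_adj (f := fun p => b p * b (n - p)) fun _ _ => grC_adj_mul_sub_eq haut

theorem stmt_15 {K : Type*} [Field K] (n : ℕ) (hn : 2 ≤ n) (c : ℕ → ℕ → K)
    (hsym : ∀ i j, c i j = c j i)
    (hassoc : ∀ i j l, 1 ≤ i → 1 ≤ j → 1 ≤ l →
      c j l * c i (j + l) = c i j * c (i + j) l)
    (hzero : ∀ i j, i = 0 ∨ j = 0 ∨ n - 1 < i + j → c i j = 0)
    -- a graded algebra automorphism σ = (b_1,...,b_{n-1}) of p(C)
    (b : ℕ → K) (hb : ∀ i, 1 ≤ i → i ≤ n - 1 → b i ≠ 0)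
    (haut : ∀ i j, 1 ≤ i → 1 ≤ j → i + j ≤ n - 1 → c i j ≠ 0 →
      b (i + j) = b i * b j) :
    -- then b_p b_{n-p} = b_q b_{n-q} for vertices in the same connected component
    ∀ p q, (grC n c).Reachable p q → 1 ≤ p → p ≤ n - 1 → 1 ≤ q → q ≤ n - 1 →
      b p * b (n - p) = b q * b (n - q) :=
  stmt_15_general n c b haut
end
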